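/- arXiv:2504.07505 — 4 statements merged into one kernel-verified Lean document; each statement's English description precedes it below -/
import Mathlib

section
/- For every upper-barred number u ∈ U and every integer k with 1 ≤ k ≤ μ(u), one has γ^k(u) < n+2−k; that is, each position (n+2−k, γ^k(u)) recorded by the projection Π_c lies strictly below the main diagonal of an (n+1)×(n+1) matrix. -/
/-- The Coxeter element `c = (1, d_1, …, d_r, n+1, u_s, …, u_1)` regarded as a permutation
(as a function): elements of `{1} ∪ D` are sent to the next element of `D ∪ {n+1}`, `n+1` is
sent to `max U` (or to `1` when `U = ∅`), and `u ∈ U` is sent to the largest element of `U`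
below it (or to `1` if there is none). -/
def gammaFun (n : ℕ) (D U : Finset ℕ) (x : ℕ) : ℕ :=
  if x = n + 1 then WithBot.unbotD 1 U.max
  else if x ∈ U then WithBot.unbotD 1 ((U.filter (fun v => v < x)).max)
  else WithTop.untopD (n + 1) (((insert (n + 1) D).filter (fun d => x < d)).min)

/-- Potential function: number of steps from `x` before the orbit can reach a value `≥ u`. -/
def phiAux (u : ℕ) (D U : Finset ℕ) (x : ℕ) : ℕ :=
  if x ∈ D ∨ x = 1 then (D.filter (fun d => x < d ∧ d < u)).card + 1
  else (U.filter (fun v => v < x)).card + (D.filter (fun d => d < u)).card + 2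

/-- For every upper-barred `u ∈ U` and `1 ≤ k ≤ μ(u) = min(u-1, n+1-u)`, one has
`γ^k(u) < n+2-k`: the position `(n+2-k, γ^k(u))` lies strictly below the main diagonal. -/
theorem statement12 (n : ℕ) (hn : 1 ≤ n) (D U : Finset ℕ)
    (hD : D ⊆ Finset.Icc 2 n) (hU : U = Finset.Icc 2 n \ D)
    (u : ℕ) (hu : u ∈ U) (k : ℕ) (hk1 : 1 ≤ k) (hk2 : k ≤ min (u - 1) (n + 1 - u)) :
    (gammaFun n D U)^[k] u < n + 2 - k := by
  have hUsub : U ⊆ Finset.Icc 2 n := hU ▸ Finset.sdiff_subset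
  have hu2 : 2 ≤ u := (Finset.mem_Icc.mp (hUsub hu)).1
  have hun : u ≤ n := (Finset.mem_Icc.mp (hUsub hu)).2
  have hdisj : ∀ x, x ∈ U → x ∉ D := by
    intro x hx
    rw [hU] at hx
    exact (Finset.mem_sdiff.mp hx).2
  have hUlow : ∀ x, x ∈ U → 2 ≤ x ∧ x ≤ n := fun x hx => Finset.mem_Icc.mp (hUsub hx)
  have hDlow : ∀ x, x ∈ D → 2 ≤ x ∧ x ≤ n := fun x hx => Finset.mem_Icc.mp (hD hx)
  set f := gammaFun n D U with hf
  set φ := phiAux u D U with hφ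
  -- splitting the interval [2, u-1] into its U-part and D-part
  have hsplit : (U.filter (fun v => v < u)).card + (D.filter (fun d => d < u)).card = u - 2 := by
    have hdisj2 : Disjoint (U.filter (fun v => v < u)) (D.filter (fun d => d < u)) := by
      rw [Finset.disjoint_left]
      intro a ha hb
      exact hdisj a (Finset.mem_filter.mp ha).1 (Finset.mem_filter.mp hb).1
    have hunion : U.filter (fun v => v < u) ∪ D.filter (fun d => d < u)
        = Finset.Icc 2 (u - 1) := by
      ext x
      simp only [Finset.mem_union, Finset.mem_filter, Finset.mem_Icc]
      constructor
      · rintro (⟨hxU, hlt⟩ | ⟨hxD, hlt⟩)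
        · have := hUlow x hxU; omega
        · have := hDlow x hxD; omega
      · rintro ⟨h2, hle⟩
        by_cases hxD : x ∈ D
        · right; exact ⟨hxD, by omega⟩
        · left
          refine ⟨?_, by omega⟩
          rw [hU, Finset.mem_sdiff, Finset.mem_Icc]
          exact ⟨⟨h2, by omega⟩, hxD⟩
    have := Finset.card_union_of_disjoint hdisj2
    rw [hunion, Nat.card_Icc] at this
    omega
  -- step lemma for x ∈ U
  have stepU : ∀ x, x ∈ U → f x < x ∧ (f x ∈ U ∨ f x = 1) ∧ φ x ≤ φ (f x) + 1 := by
    intro x hx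
    obtain ⟨hx2, hxn⟩ := hUlow x hx
    have hxne : x ≠ n + 1 := by omega
    have hfx : f x = WithBot.unbotD 1 ((U.filter (fun v => v < x)).max) := by
      rw [hf]; unfold gammaFun
      rw [if_neg hxne, if_pos hx]
    have hφx : φ x = (U.filter (fun v => v < x)).card
        + (D.filter (fun d => d < u)).card + 2 := by
      rw [hφ]; unfold phiAux
      rw [if_neg]
      push_neg
      exact ⟨hdisj x hx, by omega⟩
    by_cases hne : (U.filter (fun v => v < x)).Nonempty
    · set M := (U.filter (fun v => v < x)).max' hne with hM
      have hmax : (U.filter (fun v => v < x)).max = (M : WithBot ℕ) :=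
        (Finset.coe_max' hne).symm
      have hfx2 : f x = M := by rw [hfx, hmax]; rfl
      have hMmem := Finset.max'_mem _ hne
      rw [Finset.mem_filter] at hMmem
      obtain ⟨hMU, hMlt⟩ := hMmem
      have hcard : (U.filter (fun v => v < x)).card
          = (U.filter (fun v => v < M)).card + 1 := by
        have heq : U.filter (fun v => v < x) = insert M (U.filter (fun v => v < M)) := by
          ext y
          simp only [Finset.mem_insert, Finset.mem_filter]
          constructor
          · rintro ⟨hyU, hylt⟩
            by_cases hyM : y = M
            · exact Or.inl hyM
            · refine Or.inr ⟨hyU, ?_⟩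
              have : y ≤ M := Finset.le_max' (U.filter (fun v => v < x)) y (Finset.mem_filter.mpr ⟨hyU, hylt⟩)
              omega
          · rintro (h | ⟨hyU, hylt⟩)
            · rw [h]; exact ⟨hMU, hMlt⟩
            · exact ⟨hyU, by omega⟩
        rw [heq, Finset.card_insert_of_notMem (by simp)]
      have hφM : φ M = (U.filter (fun v => v < M)).card
          + (D.filter (fun d => d < u)).card + 2 := by
        rw [hφ]; unfold phiAux
        rw [if_neg]
        push_neg
        have := hUlow M hMU
        exact ⟨hdisj M hMU, by omega⟩
      refine ⟨by omega, Or.inl (hfx2 ▸ hMU), ?_⟩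
      rw [hfx2, hφx, hφM, hcard]
      omega
    · have hempty : U.filter (fun v => v < x) = ∅ :=
        Finset.not_nonempty_iff_eq_empty.mp hne
      have hfx2 : f x = 1 := by
        rw [hfx, hempty]
        simp
      have hφ1 : φ 1 = (D.filter (fun d => d < u)).card + 1 := by
        rw [hφ]; unfold phiAux
        rw [if_pos (Or.inr rfl)]
        have heq : D.filter (fun d => 1 < d ∧ d < u) = D.filter (fun d => d < u) := by
          apply Finset.filter_congr
          intro d hd
          have := hDlow d hd
          exact ⟨fun h => h.2, fun h => ⟨by omega, h⟩⟩
        rw [heq]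
      refine ⟨by omega, Or.inr hfx2, ?_⟩
      rw [hfx2, hφx, hempty, hφ1]
      simp
  -- step lemma for x ∈ D or x = 1
  have stepD : ∀ x, (x ∈ D ∨ x = 1) → x < u → 2 ≤ φ x →
      f x < u ∧ f x ∈ D ∧ φ x ≤ φ (f x) + 1 := by
    intro x hxD hxu hφ2
    have hxne : x ≠ n + 1 := by omega
    have hxU : x ∉ U := by
      rcases hxD with hxD | rfl
      · exact fun h => hdisj x h hxD
      · intro h; have := hUlow 1 h; omega
    have hfx : f x = WithTop.untopD (n + 1) (((insert (n + 1) D).filter (fun d => x < d)).min) := by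
      rw [hf]; unfold gammaFun
      rw [if_neg hxne, if_neg hxU]
    have hφx : φ x = (D.filter (fun d => x < d ∧ d < u)).card + 1 := by
      rw [hφ]; unfold phiAux
      rw [if_pos hxD]
    have hcard1 : 1 ≤ (D.filter (fun d => x < d ∧ d < u)).card := by omega
    obtain ⟨d₀, hd₀⟩ := Finset.card_pos.mp (by omega : 0 < (D.filter (fun d => x < d ∧ d < u)).card)
    rw [Finset.mem_filter] at hd₀
    have hd₀D := hd₀.1
    have hd₀x := hd₀.2.1
    have hd₀u := hd₀.2.2
    have hne : ((insert (n + 1) D).filter (fun d => x < d)).Nonempty := by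
      refine ⟨n + 1, Finset.mem_filter.mpr ⟨Finset.mem_insert_self _ _, by omega⟩⟩
    set M := ((insert (n + 1) D).filter (fun d => x < d)).min' hne with hM
    have hmin : ((insert (n + 1) D).filter (fun d => x < d)).min = (M : WithTop ℕ) :=
      (Finset.coe_min' hne).symm
    have hfx2 : f x = M := by rw [hfx, hmin]; rfl
    have hMmem := Finset.min'_mem _ hne
    rw [Finset.mem_filter] at hMmem
    obtain ⟨hMins, hMx⟩ := hMmem
    have hMd₀ : M ≤ d₀ := Finset.min'_le ((insert (n + 1) D).filter (fun d => x < d)) d₀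
      (Finset.mem_filter.mpr ⟨Finset.mem_insert_of_mem hd₀D, hd₀x⟩)
    have hMu : M < u := by omega
    have hMD : M ∈ D := by
      rcases Finset.mem_insert.mp hMins with h | h
      · omega
      · exact h
    have hcard : (D.filter (fun d => x < d ∧ d < u)).card
        = (D.filter (fun d => M < d ∧ d < u)).card + 1 := by
      have heq : D.filter (fun d => x < d ∧ d < u)
          = insert M (D.filter (fun d => M < d ∧ d < u)) := by
        ext y
        simp only [Finset.mem_insert, Finset.mem_filter]
        constructor
        · rintro ⟨hyD, hyx, hyu⟩
          by_cases hyM : y = M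
          · exact Or.inl hyM
          · refine Or.inr ⟨hyD, ?_, hyu⟩
            have : M ≤ y := Finset.min'_le ((insert (n + 1) D).filter (fun d => x < d)) y
              (Finset.mem_filter.mpr ⟨Finset.mem_insert_of_mem hyD, hyx⟩)
            omega
        · rintro (h | ⟨hyD, hyM, hyu⟩)
          · rw [h]; exact ⟨hMD, hMx, hMu⟩
          · exact ⟨hyD, by omega, hyu⟩
      rw [heq, Finset.card_insert_of_notMem (by simp)]
    have hφM : φ M = (D.filter (fun d => M < d ∧ d < u)).card + 1 := by
      rw [hφ]; unfold phiAux
      rw [if_pos (Or.inl hMD)]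
    refine ⟨hfx2 ▸ hMu, hfx2 ▸ hMD, ?_⟩
    rw [hfx2, hφx, hφM, hcard]
  -- main induction
  have main : ∀ m, m ≤ u - 1 →
      f^[m] u ≤ u ∧ (f^[m] u ∈ U ∨ f^[m] u = 1 ∨ f^[m] u ∈ D) ∧ u - m ≤ φ (f^[m] u) ∧
      (1 ≤ m → f^[m] u < u) := by
    intro m
    induction m with
    | zero =>
      intro _
      have hφu : φ u = u := by
        rw [hφ]; unfold phiAux
        rw [if_neg]
        · omega
        · push_neg
          exact ⟨hdisj u hu, by omega⟩
      simp only [Function.iterate_zero_apply]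
      exact ⟨le_refl u, Or.inl hu, by omega, by omega⟩
    | succ m ih =>
      intro hm
      obtain ⟨hx1, hx2, hx3, _⟩ := ih (by omega)
      set x := f^[m] u with hx
      have hiter : f^[m + 1] u = f x := by
        rw [Function.iterate_succ_apply']
      rcases hx2 with hxU | hxrest
      · obtain ⟨h1, h2, h3⟩ := stepU x hxU
        rw [hiter]
        refine ⟨by omega, ?_, by omega, fun _ => by omega⟩
        rcases h2 with h | h
        · exact Or.inl h
        · exact Or.inr (Or.inl h)
      · have hxDor1 : x ∈ D ∨ x = 1 := by tauto
        have hxu : x < u := by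
          rcases hxDor1 with hxD | h1
          · have : x ≠ u := fun h => hdisj u hu (h ▸ hxD)
            omega
          · omega
        have hφ2 : 2 ≤ φ x := by omega
        obtain ⟨h1, h2, h3⟩ := stepD x hxDor1 hxu hφ2
        rw [hiter]
        exact ⟨by omega, Or.inr (Or.inr h2), by omega, fun _ => h1⟩
  obtain ⟨-, -, -, h4⟩ := main k (le_trans hk2 (min_le_left _ _))
  have hlt := h4 hk1
  omega
end

section
/- The three families of positions in the definition of S_c are pairwise disjoint, each family consists of pairwise distinct positions, and the set S_c has exactly n(n+1)/2 = binomial(n+1, 2) elements. -/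
/-- The first family of positions recorded by `Π_c`: `(i,d)` for `d ∈ D ∪ {n+1}` and
`1 ≤ i ≤ d-1`. -/
def Sc1 (n : ℕ) (D : Finset ℕ) : Finset (ℕ × ℕ) :=
  (insert (n + 1) D).biUnion fun d => (Finset.Icc 1 (d - 1)).image fun i => (i, d)

/-- The second family of positions recorded by `Π_c`: `(n+2-k, γ^k(u))` for `u ∈ U` and
`1 ≤ k ≤ μ(u) = min(u-1, n+1-u)`. -/
def Sc2 (n : ℕ) (D U : Finset ℕ) : Finset (ℕ × ℕ) :=
  U.biUnion fun u => (Finset.Icc 1 (min (u - 1) (n + 1 - u))).image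
    fun k => (n + 2 - k, (gammaFun n D U)^[k] u)

/-- The third family of positions recorded by `Π_c`: `(i,u)` for `u ∈ U` with `2u > n+2` and
`μ(u)+1 ≤ i ≤ u-1`. -/
def Sc3 (n : ℕ) (U : Finset ℕ) : Finset (ℕ × ℕ) :=
  (U.filter fun u => n + 2 < 2 * u).biUnion fun u =>
    (Finset.Icc (min (u - 1) (n + 1 - u) + 1) (u - 1)).image fun i => (i, u)

/-- The set `S_c` of positions recorded by the projection `Π_c`. -/
def ScF (n : ℕ) (D U : Finset ℕ) : Finset (ℕ × ℕ) := Sc1 n D ∪ Sc2 n D U ∪ Sc3 n U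

/-- The zero set `Z_c`. -/
def ZcF (n : ℕ) (D U : Finset ℕ) : Finset (ℕ × ℕ) :=
  (U.biUnion fun u => (Finset.Icc 1 (min (u - 1) (n + 1 - u))).image fun i => (i, u)) ∪
  (D.biUnion fun d => (Finset.Icc (max (d + 1) (n + 3 - d)) (n + 1)).image fun i => (i, d))

/-- capacity: remaining steps before the orbit of `u` leaves `[1,u)`. -/
def cap (D U : Finset ℕ) (u y : ℕ) : ℕ :=
  if y ∈ U then (U.filter (· < y)).card + 1 + (D.filter (· < u)).card
  else (D.filter (fun d => y < d ∧ d < u)).card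

section
variable (n : ℕ) (D U : Finset ℕ)

/-- value of γ on the "max" branch -/
lemma gamma_val_max (hU : U = Finset.Icc 2 n \ D) (x : ℕ) (hx : x ∈ U ∨ x = n + 1) :
    gammaFun n D U x = WithBot.unbotD 1 ((U.filter (fun v => v < x)).max) := by
  rcases hx with hx | rfl
  · have hx2 : 2 ≤ x ∧ x ≤ n := by
      rw [hU] at hx; simp only [Finset.mem_sdiff, Finset.mem_Icc] at hx; exact ⟨hx.1.1, hx.1.2⟩
    have : x ≠ n + 1 := by omega
    simp [gammaFun, this, hx]
  · have : U.filter (fun v => v < n + 1) = U := by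
      apply Finset.filter_true_of_mem
      intro v hv
      rw [hU] at hv; simp only [Finset.mem_sdiff, Finset.mem_Icc] at hv; omega
    simp only [gammaFun, if_pos rfl, this, if_true]

lemma gamma_val_min (hU : U = Finset.Icc 2 n \ D) (x : ℕ) (hxn : x ≤ n) (hx : x ∉ U) :
    gammaFun n D U x ∈ insert (n + 1) D ∧ x < gammaFun n D U x ∧
      ∀ d ∈ insert (n + 1) D, x < d → gammaFun n D U x ≤ d := by
  have hne : x ≠ n + 1 := by omega
  have hmem : n + 1 ∈ (insert (n + 1) D).filter (fun d => x < d) := by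
    simp only [Finset.mem_filter]
    exact ⟨Finset.mem_insert_self _ _, by omega⟩
  cases hmin : ((insert (n + 1) D).filter (fun d => x < d)).min with
  | top =>
    exact absurd (Finset.min_eq_top.mp hmin ▸ hmem) (by simp)
  | coe w =>
    have hw := Finset.mem_of_min hmin
    simp only [Finset.mem_filter] at hw
    have hval : gammaFun n D U x = w := by
      simp only [gammaFun, if_neg hne, if_neg hx, hmin, WithTop.untopD_coe]
    refine ⟨hval ▸ hw.1, hval ▸ hw.2, ?_⟩
    intro d hd hxd
    have := Finset.min_le (s := (insert (n + 1) D).filter (fun d => x < d))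
      (a := d) (by simp only [Finset.mem_filter]; exact ⟨hd, hxd⟩)
    rw [hmin] at this
    exact hval ▸ (WithTop.coe_le_coe.mp this)

/-- value cases for the "max" branch -/
lemma max_val_cases (x : ℕ) :
    (WithBot.unbotD 1 ((U.filter (fun v => v < x)).max) = 1 ∧ ∀ v ∈ U, ¬ v < x) ∨
    (∃ w ∈ U, w < x ∧ WithBot.unbotD 1 ((U.filter (fun v => v < x)).max) = w ∧
      ∀ v ∈ U, v < x → v ≤ w) := by
  cases hmax : (U.filter (fun v => v < x)).max with
  | bot =>
    left
    refine ⟨by simp [hmax], ?_⟩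
    intro v hv hlt
    have : v ∈ U.filter (fun v => v < x) := by simp [hv, hlt]
    rw [Finset.max_eq_bot.mp hmax] at this
    simp at this
  | coe w =>
    right
    have hw := Finset.mem_of_max hmax
    simp only [Finset.mem_filter] at hw
    refine ⟨w, hw.1, hw.2, by simp [hmax], ?_⟩
    intro v hv hlt
    have := Finset.le_max (s := U.filter (fun v => v < x)) (a := v) (by simp [hv, hlt])
    rw [hmax] at this
    exact WithBot.coe_le_coe.mp this

end

section
variable (n : ℕ) (D U : Finset ℕ)

lemma one_not_mem_U (hU : U = Finset.Icc 2 n \ D) : 1 ∉ U := by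
  rw [hU]; simp

lemma mem_U_iff (hU : U = Finset.Icc 2 n \ D) (x : ℕ) :
    x ∈ U ↔ 2 ≤ x ∧ x ≤ n ∧ x ∉ D := by
  rw [hU]; simp only [Finset.mem_sdiff, Finset.mem_Icc]; tauto

lemma cap_step (hn : 1 ≤ n) (hD : D ⊆ Finset.Icc 2 n) (hU : U = Finset.Icc 2 n \ D)
    (u y : ℕ) (hu : u ∈ U) (hyu : y ≤ u)
    (htag : y = 1 ∨ y ∈ D ∨ y ∈ U)
    (hcap : 1 ≤ cap D U u y) :
    gammaFun n D U y < u ∧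
    (gammaFun n D U y = 1 ∨ gammaFun n D U y ∈ D ∨ gammaFun n D U y ∈ U) ∧
    cap D U u (gammaFun n D U y) + 1 = cap D U u y := by
  have hu2 : 2 ≤ u ∧ u ≤ n ∧ u ∉ D := (mem_U_iff n D U hU u).mp hu
  by_cases hyU : y ∈ U
  · -- max branch
    have hy2 : 2 ≤ y ∧ y ≤ n ∧ y ∉ D := (mem_U_iff n D U hU y).mp hyU
    have hval := gamma_val_max n D U hU y (Or.inl hyU)
    rcases max_val_cases U y with ⟨h1, hempty⟩ | ⟨w, hwU, hwy, hwval, hwmax⟩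
    · -- value is 1
      rw [hval, h1]
      have h1U : (1 : ℕ) ∉ U := one_not_mem_U n D U hU
      have hfe : (U.filter (· < y)).card = 0 := by
        rw [Finset.card_eq_zero, Finset.filter_eq_empty_iff]
        exact fun v hv => hempty v hv
      have hc1 : cap D U u 1 = (D.filter (· < u)).card := by
        rw [cap, if_neg h1U]
        congr 1
        apply Finset.filter_congr
        intro d hd
        have := hD hd
        simp only [Finset.mem_Icc] at this
        omega
      rw [hc1, cap, if_pos hyU, hfe]
      exact ⟨by omega, Or.inl rfl, by omega⟩
    · -- value is w ∈ U
      rw [hval, hwval]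
      have hfilter : U.filter (· < y) = insert w (U.filter (· < w)) := by
        ext v
        simp only [Finset.mem_filter, Finset.mem_insert]
        constructor
        · rintro ⟨hvU, hvy⟩
          have := hwmax v hvU hvy
          rcases eq_or_lt_of_le this with h | h
          · exact Or.inl h
          · exact Or.inr ⟨hvU, h⟩
        · rintro (rfl | ⟨hvU, hvw⟩)
          · exact ⟨hwU, hwy⟩
          · exact ⟨hvU, lt_trans hvw hwy⟩
      have hcard : (U.filter (· < y)).card = (U.filter (· < w)).card + 1 := by
        rw [hfilter, Finset.card_insert_of_notMem (by simp)]
      simp only [cap]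
      rw [if_pos hyU, if_pos hwU, hcard]
      exact ⟨by omega, Or.inr (Or.inr hwU), by omega⟩
  · -- min branch
    have hylt : y < u := lt_of_le_of_ne hyu (fun h => hyU (h ▸ hu))
    have hyn : y ≤ n := by omega
    have hcap' : 1 ≤ (D.filter (fun d => y < d ∧ d < u)).card := by
      rwa [cap, if_neg hyU] at hcap
    obtain ⟨d0, hd0⟩ := Finset.card_pos.mp hcap'
    simp only [Finset.mem_filter] at hd0
    obtain ⟨hval_mem, hval_lt, hval_min⟩ := gamma_val_min n D U hU y hyn hyU
    set w := gammaFun n D U y with hw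
    have hwd0 : w ≤ d0 := hval_min d0 (Finset.mem_insert_of_mem hd0.1) hd0.2.1
    have hwu : w < u := lt_of_le_of_lt hwd0 hd0.2.2
    have hwD : w ∈ D := by
      rcases Finset.mem_insert.mp hval_mem with h | h
      · omega
      · exact h
    have hwU : w ∉ U := by
      rw [mem_U_iff n D U hU]; tauto
    have hfilter : D.filter (fun d => y < d ∧ d < u)
        = insert w (D.filter (fun d => w < d ∧ d < u)) := by
      ext d
      simp only [Finset.mem_filter, Finset.mem_insert]
      constructor
      · rintro ⟨hdD, hyd, hdu⟩
        have := hval_min d (Finset.mem_insert_of_mem hdD) hyd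
        rcases eq_or_lt_of_le this with h | h
        · exact Or.inl h.symm
        · exact Or.inr ⟨hdD, h, hdu⟩
      · rintro (rfl | ⟨hdD, hwd, hdu⟩)
        · exact ⟨hwD, hval_lt, hwu⟩
        · exact ⟨hdD, lt_trans hval_lt hwd, hdu⟩
    have hcard : (D.filter (fun d => y < d ∧ d < u)).card
        = (D.filter (fun d => w < d ∧ d < u)).card + 1 := by
      rw [hfilter, Finset.card_insert_of_notMem (by simp)]
    simp only [cap]
    rw [if_neg hyU, if_neg hwU, hcard]
    exact ⟨hwu, Or.inr (Or.inl hwD), by omega⟩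

end

section
variable (n : ℕ) (D U : Finset ℕ)

lemma cap_start (hD : D ⊆ Finset.Icc 2 n) (hU : U = Finset.Icc 2 n \ D)
    (u : ℕ) (hu : u ∈ U) : cap D U u u = u - 1 := by
  have hu2 : 2 ≤ u ∧ u ≤ n ∧ u ∉ D := (mem_U_iff n D U hU u).mp hu
  have hunion : U.filter (· < u) ∪ D.filter (· < u) = Finset.Icc 2 (u - 1) := by
    ext x
    simp only [Finset.mem_union, Finset.mem_filter, Finset.mem_Icc, mem_U_iff n D U hU]
    constructor
    · rintro (⟨⟨h2, hn', _⟩, hlt⟩ | ⟨hxD, hlt⟩)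
      · omega
      · have := hD hxD; simp only [Finset.mem_Icc] at this; omega
    · rintro ⟨h2, hle⟩
      by_cases hxD : x ∈ D
      · exact Or.inr ⟨hxD, by omega⟩
      · exact Or.inl ⟨⟨h2, by omega, hxD⟩, by omega⟩
  have hdisj : Disjoint (U.filter (· < u)) (D.filter (· < u)) := by
    rw [Finset.disjoint_left]
    intro x hx hx'
    simp only [Finset.mem_filter, mem_U_iff n D U hU] at hx hx'
    exact hx.1.2.2 hx'.1
  have hcard : (U.filter (· < u)).card + (D.filter (· < u)).card = u - 2 := by
    rw [← Finset.card_union_of_disjoint hdisj, hunion, Nat.card_Icc]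
    omega
  rw [cap, if_pos hu]
  omega

lemma gamma_orbit (hn : 1 ≤ n) (hD : D ⊆ Finset.Icc 2 n) (hU : U = Finset.Icc 2 n \ D)
    (u : ℕ) (hu : u ∈ U) :
    ∀ k, k ≤ u - 1 →
      (gammaFun n D U)^[k] u ≤ u ∧
      ((gammaFun n D U)^[k] u = 1 ∨ (gammaFun n D U)^[k] u ∈ D ∨ (gammaFun n D U)^[k] u ∈ U) ∧
      cap D U u ((gammaFun n D U)^[k] u) + k = u - 1 ∧
      (1 ≤ k → (gammaFun n D U)^[k] u < u) := by
  have hu2 : 2 ≤ u ∧ u ≤ n ∧ u ∉ D := (mem_U_iff n D U hU u).mp hu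
  intro k
  induction k with
  | zero =>
    intro _
    simp only [Function.iterate_zero, id_eq]
    exact ⟨le_refl u, Or.inr (Or.inr hu), by rw [cap_start n D U hD hU u hu]; omega, by omega⟩
  | succ k ih =>
    intro hk
    have hk' : k ≤ u - 1 := by omega
    obtain ⟨hle, htag, hcap, _⟩ := ih hk'
    have hcap1 : 1 ≤ cap D U u ((gammaFun n D U)^[k] u) := by omega
    have := cap_step n D U hn hD hU u ((gammaFun n D U)^[k] u) hu hle htag hcap1
    rw [Function.iterate_succ_apply']
    exact ⟨le_of_lt this.1, this.2.1, by omega, fun _ => this.1⟩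

/-- key: the orbit of `u ∈ U` stays strictly below `u` for `1 ≤ k ≤ u-1`. -/
lemma gamma_orbit_lt (hn : 1 ≤ n) (hD : D ⊆ Finset.Icc 2 n) (hU : U = Finset.Icc 2 n \ D)
    (u k : ℕ) (hu : u ∈ U) (hk1 : 1 ≤ k) (hk : k ≤ u - 1) :
    (gammaFun n D U)^[k] u < u :=
  (gamma_orbit n D U hn hD hU u hu k hk).2.2.2 hk1

end

section
variable (n : ℕ) (D U : Finset ℕ)

lemma gamma_mem (hn : 1 ≤ n) (hD : D ⊆ Finset.Icc 2 n) (hU : U = Finset.Icc 2 n \ D)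
    (x : ℕ) (hx1 : 1 ≤ x) (hx2 : x ≤ n + 1) :
    1 ≤ gammaFun n D U x ∧ gammaFun n D U x ≤ n + 1 := by
  by_cases hb : x ∈ U ∨ x = n + 1
  · rw [gamma_val_max n D U hU x hb]
    rcases max_val_cases U x with ⟨h1, _⟩ | ⟨w, hwU, _, hwval, _⟩
    · rw [h1]; omega
    · rw [hwval]
      have := (mem_U_iff n D U hU w).mp hwU
      omega
  · push_neg at hb
    have hxn : x ≤ n := by omega
    obtain ⟨hmem, _, _⟩ := gamma_val_min n D U hU x hxn hb.1
    rcases Finset.mem_insert.mp hmem with h | h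
    · omega
    · have := hD h; simp only [Finset.mem_Icc] at this; omega

lemma gamma_inj_lt (hn : 1 ≤ n) (hD : D ⊆ Finset.Icc 2 n) (hU : U = Finset.Icc 2 n \ D)
    (x x' : ℕ) (hx1 : 1 ≤ x) (hx2 : x' ≤ n + 1) (hlt : x < x') :
    gammaFun n D U x ≠ gammaFun n D U x' := by
  have h1U : (1 : ℕ) ∉ U := one_not_mem_U n D U hU
  by_cases hb' : x' ∈ U ∨ x' = n + 1
  · -- x' in max branch
    rw [gamma_val_max n D U hU x' hb']
    by_cases hb : x ∈ U ∨ x = n + 1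
    · -- x also in max branch; x < x' ≤ n+1 and x ∈ U (since x ≤ n)
      have hxU : x ∈ U := by
        rcases hb with h | h
        · exact h
        · omega
      rw [gamma_val_max n D U hU x (Or.inl hxU)]
      have hx2' : 2 ≤ x := ((mem_U_iff n D U hU x).mp hxU).1
      rcases max_val_cases U x' with ⟨_, hempty⟩ | ⟨w, hwU, hwx', hwval, hwmax⟩
      · exact absurd hlt (hempty x hxU)
      · rw [hwval]
        have hxw : x ≤ w := hwmax x hxU hlt
        rcases max_val_cases U x with ⟨h1, _⟩ | ⟨v, hvU, hvx, hvval, _⟩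
        · rw [h1]; omega
        · rw [hvval]; omega
    · -- x in min branch, x' in max branch: ranges disjoint
      push_neg at hb
      obtain ⟨hmem, hxlt, _⟩ := gamma_val_min n D U hU x (by omega) hb.1
      rcases max_val_cases U x' with ⟨h1, _⟩ | ⟨w, hwU, _, hwval, _⟩
      · rw [h1]
        intro h
        rw [h] at hmem
        rcases Finset.mem_insert.mp hmem with h' | h'
        · omega
        · have := hD h'; simp only [Finset.mem_Icc] at this; omega
      · rw [hwval]
        intro h
        rw [h] at hmem
        have := (mem_U_iff n D U hU w).mp hwU
        rcases Finset.mem_insert.mp hmem with h' | h'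
        · omega
        · exact this.2.2 h'
  · -- x' in min branch
    push_neg at hb'
    have hx'n : x' ≤ n := by omega
    obtain ⟨hmem', hxlt', hmin'⟩ := gamma_val_min n D U hU x' hx'n hb'.1
    by_cases hb : x ∈ U ∨ x = n + 1
    · -- x in max branch, x' in min: disjoint ranges
      have hxU : x ∈ U := by
        rcases hb with h | h
        · exact h
        · omega
      rw [gamma_val_max n D U hU x (Or.inl hxU)]
      rcases max_val_cases U x with ⟨h1, _⟩ | ⟨w, hwU, _, hwval, _⟩
      · rw [h1]
        intro h
        rw [← h] at hmem'
        rcases Finset.mem_insert.mp hmem' with h' | h'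
        · omega
        · have := hD h'; simp only [Finset.mem_Icc] at this; omega
      · rw [hwval]
        intro h
        rw [← h] at hmem'
        have := (mem_U_iff n D U hU w).mp hwU
        rcases Finset.mem_insert.mp hmem' with h' | h'
        · omega
        · exact this.2.2 h'
    · -- both in min branch
      push_neg at hb
      obtain ⟨_, _, hmin⟩ := gamma_val_min n D U hU x (by omega) hb.1
      have hx'D : x' ∈ D := by
        have : 2 ≤ x' := by omega
        by_contra hx'D
        exact hb'.1 ((mem_U_iff n D U hU x').mpr ⟨this, hx'n, hx'D⟩)
      have h1 : gammaFun n D U x ≤ x' :=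
        hmin x' (Finset.mem_insert_of_mem hx'D) hlt
      omega

lemma gamma_iter_mem (hn : 1 ≤ n) (hD : D ⊆ Finset.Icc 2 n) (hU : U = Finset.Icc 2 n \ D)
    (k x : ℕ) (hx1 : 1 ≤ x) (hx2 : x ≤ n + 1) :
    1 ≤ (gammaFun n D U)^[k] x ∧ (gammaFun n D U)^[k] x ≤ n + 1 := by
  induction k with
  | zero => simpa using ⟨hx1, hx2⟩
  | succ k ih =>
    rw [Function.iterate_succ_apply']
    exact gamma_mem n D U hn hD hU _ ih.1 ih.2

lemma gamma_iter_inj (hn : 1 ≤ n) (hD : D ⊆ Finset.Icc 2 n) (hU : U = Finset.Icc 2 n \ D)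
    (k x x' : ℕ) (hx1 : 1 ≤ x) (hx2 : x ≤ n + 1) (hx1' : 1 ≤ x') (hx2' : x' ≤ n + 1)
    (h : (gammaFun n D U)^[k] x = (gammaFun n D U)^[k] x') : x = x' := by
  induction k with
  | zero => simpa using h
  | succ k ih =>
    apply ih
    rw [Function.iterate_succ_apply', Function.iterate_succ_apply'] at h
    obtain ⟨ha1, ha2⟩ := gamma_iter_mem n D U hn hD hU k x hx1 hx2
    obtain ⟨hb1, hb2⟩ := gamma_iter_mem n D U hn hD hU k x' hx1' hx2'
    rcases lt_trichotomy ((gammaFun n D U)^[k] x) ((gammaFun n D U)^[k] x') with hc | hc | hc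
    · exact absurd h (gamma_inj_lt n D U hn hD hU _ _ ha1 hb2 hc)
    · exact hc
    · exact absurd h.symm (gamma_inj_lt n D U hn hD hU _ _ hb1 ha2 hc)

end

section
variable (n : ℕ) (D U : Finset ℕ)

lemma mem_Sc2_elim (hn : 1 ≤ n) (hD : D ⊆ Finset.Icc 2 n) (hU : U = Finset.Icc 2 n \ D)
    (p : ℕ × ℕ) (hp : p ∈ Sc2 n D U) :
    ∃ u ∈ U, ∃ k, 1 ≤ k ∧ k ≤ min (u - 1) (n + 1 - u) ∧
      p.1 = n + 2 - k ∧ p.2 = (gammaFun n D U)^[k] u ∧ p.2 < u ∧ u + 1 ≤ p.1 := by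
  simp only [Sc2, Finset.mem_biUnion, Finset.mem_image, Finset.mem_Icc] at hp
  obtain ⟨u, hu, k, ⟨hk1, hk2⟩, hpk⟩ := hp
  have hu2 : 2 ≤ u ∧ u ≤ n ∧ u ∉ D := (mem_U_iff n D U hU u).mp hu
  have hlt : (gammaFun n D U)^[k] u < u :=
    gamma_orbit_lt n D U hn hD hU u k hu hk1 (by omega)
  exact ⟨u, hu, k, hk1, hk2, (congrArg Prod.fst hpk).symm, (congrArg Prod.snd hpk).symm,
    by rw [← hpk]; exact hlt, by rw [← hpk]; show u + 1 ≤ n + 2 - k; omega⟩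

lemma card_Sc1 : (Sc1 n D).card = ∑ d ∈ insert (n + 1) D, (d - 1) := by
  rw [Sc1, Finset.card_biUnion]
  · apply Finset.sum_congr rfl
    intro d _
    rw [Finset.card_image_of_injective _ (fun a b h => by simpa using h), Nat.card_Icc]
    omega
  · intro d _ d' _ hne
    rw [Function.onFun, Finset.disjoint_left]
    rintro p hp hp'
    simp only [Finset.mem_image, Finset.mem_Icc] at hp hp'
    obtain ⟨i, _, rfl⟩ := hp
    obtain ⟨i', _, h⟩ := hp'
    exact hne (congrArg Prod.snd h).symm

lemma card_Sc3 : (Sc3 n U).card = ∑ u ∈ U.filter (fun u => n + 2 < 2 * u),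
    (u - 1 - min (u - 1) (n + 1 - u)) := by
  rw [Sc3, Finset.card_biUnion]
  · apply Finset.sum_congr rfl
    intro u _
    rw [Finset.card_image_of_injective _ (fun a b h => by simpa using h), Nat.card_Icc]
    omega
  · intro u _ u' _ hne
    rw [Function.onFun, Finset.disjoint_left]
    rintro p hp hp'
    simp only [Finset.mem_image, Finset.mem_Icc] at hp hp'
    obtain ⟨i, _, rfl⟩ := hp
    obtain ⟨i', _, h⟩ := hp'
    exact hne (congrArg Prod.snd h).symm

lemma card_Sc2 (hn : 1 ≤ n) (hD : D ⊆ Finset.Icc 2 n) (hU : U = Finset.Icc 2 n \ D) :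
    (Sc2 n D U).card = ∑ u ∈ U, min (u - 1) (n + 1 - u) := by
  rw [Sc2, Finset.card_biUnion]
  · apply Finset.sum_congr rfl
    intro u hu
    have hu2 : 2 ≤ u ∧ u ≤ n ∧ u ∉ D := (mem_U_iff n D U hU u).mp hu
    rw [Finset.card_image_of_injOn, Nat.card_Icc]
    · omega
    · intro k hk k' hk' h
      simp only [Finset.coe_Icc, Set.mem_Icc] at hk hk'
      have := congrArg Prod.fst h
      simp only at this
      omega
  · intro u hu u' hu' hne
    have hu2 : 2 ≤ u ∧ u ≤ n ∧ u ∉ D := (mem_U_iff n D U hU u).mp hu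
    have hu2' : 2 ≤ u' ∧ u' ≤ n ∧ u' ∉ D := (mem_U_iff n D U hU u').mp hu'
    rw [Function.onFun, Finset.disjoint_left]
    rintro p hp hp'
    simp only [Finset.mem_image, Finset.mem_Icc] at hp hp'
    obtain ⟨k, ⟨hk1, hk2⟩, rfl⟩ := hp
    obtain ⟨k', ⟨hk1', hk2'⟩, h⟩ := hp'
    have hfst := congrArg Prod.fst h
    have hsnd := congrArg Prod.snd h
    simp only at hfst hsnd
    have hkk : k' = k := by omega
    subst hkk
    exact hne (gamma_iter_inj n D U hn hD hU k' u' u (by omega) (by omega) (by omega)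
      (by omega) hsnd).symm

lemma disj12 (hn : 1 ≤ n) (hD : D ⊆ Finset.Icc 2 n) (hU : U = Finset.Icc 2 n \ D) :
    Disjoint (Sc1 n D) (Sc2 n D U) := by
  rw [Finset.disjoint_left]
  rintro p hp hp'
  obtain ⟨u, hu, k, hk1, hk2, hfst, hsnd, hlt, hge⟩ := mem_Sc2_elim n D U hn hD hU p hp'
  simp only [Sc1, Finset.mem_biUnion, Finset.mem_image, Finset.mem_Icc] at hp
  obtain ⟨d, hd, i, ⟨hi1, hi2⟩, rfl⟩ := hp
  simp only at hlt hge
  omega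

lemma disj13 (hn : 1 ≤ n) (hD : D ⊆ Finset.Icc 2 n) (hU : U = Finset.Icc 2 n \ D) :
    Disjoint (Sc1 n D) (Sc3 n U) := by
  rw [Finset.disjoint_left]
  rintro p hp hp'
  simp only [Sc1, Finset.mem_biUnion, Finset.mem_image, Finset.mem_Icc] at hp
  simp only [Sc3, Finset.mem_biUnion, Finset.mem_image, Finset.mem_Icc,
    Finset.mem_filter] at hp'
  obtain ⟨d, hd, i, _, rfl⟩ := hp
  obtain ⟨u, ⟨hu, _⟩, i', _, h⟩ := hp'
  have hsnd := congrArg Prod.snd h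
  simp only at hsnd
  have hu2 : 2 ≤ u ∧ u ≤ n ∧ u ∉ D := (mem_U_iff n D U hU u).mp hu
  rcases Finset.mem_insert.mp hd with h' | h'
  · omega
  · rw [← hsnd] at h'
    exact hu2.2.2 h'

lemma disj23 (hn : 1 ≤ n) (hD : D ⊆ Finset.Icc 2 n) (hU : U = Finset.Icc 2 n \ D) :
    Disjoint (Sc2 n D U) (Sc3 n U) := by
  rw [Finset.disjoint_left]
  rintro p hp hp'
  obtain ⟨u, hu, k, hk1, hk2, hfst, hsnd, hlt, hge⟩ := mem_Sc2_elim n D U hn hD hU p hp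
  simp only [Sc3, Finset.mem_biUnion, Finset.mem_image, Finset.mem_Icc,
    Finset.mem_filter] at hp'
  obtain ⟨u', ⟨hu', _⟩, i', ⟨_, hi2⟩, h⟩ := hp'
  have h1 := congrArg Prod.fst h
  have h2 := congrArg Prod.snd h
  simp only at h1 h2
  omega

lemma tri_sum : ∀ m : ℕ, ∑ x ∈ Finset.Icc 2 (m + 1), (x - 1) = (m + 1).choose 2 := by
  intro m
  induction m with
  | zero => simp
  | succ m ih =>
    have hins : Finset.Icc 2 (m + 2) = insert (m + 2) (Finset.Icc 2 (m + 1)) := by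
      ext x
      simp only [Finset.mem_Icc, Finset.mem_insert]
      omega
    rw [hins, Finset.sum_insert (by simp only [Finset.mem_Icc]; omega), ih]
    have h2 : (m + 2).choose 2 = (m + 1).choose 1 + (m + 1).choose 2 :=
      Nat.choose_succ_succ (m + 1) 1
    rw [h2, Nat.choose_one_right]
    omega

end

/-- The three families of positions in the definition of `S_c` are pairwise disjoint, each
family consists of pairwise distinct positions (its cardinality is the number of its
parameters), and `S_c` has exactly `binomial(n+1,2)` elements. -/
theorem statement13 (n : ℕ) (hn : 1 ≤ n) (D U : Finset ℕ)
    (hD : D ⊆ Finset.Icc 2 n) (hU : U = Finset.Icc 2 n \ D) :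
    Disjoint (Sc1 n D) (Sc2 n D U) ∧ Disjoint (Sc1 n D) (Sc3 n U) ∧
    Disjoint (Sc2 n D U) (Sc3 n U) ∧
    (Sc1 n D).card = ∑ d ∈ insert (n + 1) D, (d - 1) ∧
    (Sc2 n D U).card = ∑ u ∈ U, min (u - 1) (n + 1 - u) ∧
    (Sc3 n U).card = ∑ u ∈ U.filter (fun u => n + 2 < 2 * u),
      (u - 1 - min (u - 1) (n + 1 - u)) ∧
    (ScF n D U).card = (n + 1).choose 2 := by
  have h12 := disj12 n D U hn hD hU
  have h13 := disj13 n D U hn hD hU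
  have h23 := disj23 n D U hn hD hU
  have hc1 := card_Sc1 n D
  have hc2 := card_Sc2 n D U hn hD hU
  have hc3 := card_Sc3 n U
  refine ⟨h12, h13, h23, hc1, hc2, hc3, ?_⟩
  have hcard : (ScF n D U).card = (Sc1 n D).card + (Sc2 n D U).card + (Sc3 n U).card := by
    rw [ScF, Finset.card_union_of_disjoint (Finset.disjoint_union_left.mpr ⟨h13, h23⟩),
      Finset.card_union_of_disjoint h12]
  rw [hcard, hc1, hc2, hc3]
  have hS23 : (∑ u ∈ U, min (u - 1) (n + 1 - u)) +
      (∑ u ∈ U.filter (fun u => n + 2 < 2 * u), (u - 1 - min (u - 1) (n + 1 - u)))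
      = ∑ u ∈ U, (u - 1) := by
    rw [Finset.sum_filter, ← Finset.sum_add_distrib]
    apply Finset.sum_congr rfl
    intro u hu
    have hu2 : 2 ≤ u ∧ u ≤ n ∧ u ∉ D := (mem_U_iff n D U hU u).mp hu
    split_ifs <;> omega
  have hdisjDU : Disjoint (insert (n + 1) D) U := by
    rw [Finset.disjoint_left]
    intro x hx hxU
    have := (mem_U_iff n D U hU x).mp hxU
    rcases Finset.mem_insert.mp hx with h | h
    · omega
    · exact this.2.2 h
  have hsplit : insert (n + 1) D ∪ U = Finset.Icc 2 (n + 1) := by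
    ext x
    simp only [Finset.mem_union, Finset.mem_insert, Finset.mem_Icc, mem_U_iff n D U hU]
    constructor
    · rintro ((rfl | h) | h)
      · omega
      · have := hD h; simp only [Finset.mem_Icc] at this; omega
      · omega
    · rintro ⟨h2, hle⟩
      by_cases hx : x = n + 1
      · exact Or.inl (Or.inl hx)
      · by_cases hxD : x ∈ D
        · exact Or.inl (Or.inr hxD)
        · exact Or.inr ⟨h2, by omega, hxD⟩
  calc (∑ d ∈ insert (n + 1) D, (d - 1)) + (∑ u ∈ U, min (u - 1) (n + 1 - u)) +
        (∑ u ∈ U.filter (fun u => n + 2 < 2 * u), (u - 1 - min (u - 1) (n + 1 - u)))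
      = (∑ d ∈ insert (n + 1) D, (d - 1)) + (∑ u ∈ U, (u - 1)) := by omega
    _ = ∑ x ∈ insert (n + 1) D ∪ U, (x - 1) := (Finset.sum_union hdisjDU).symm
    _ = ∑ x ∈ Finset.Icc 2 (n + 1), (x - 1) := by rw [hsplit]
    _ = (n + 1).choose 2 := tri_sum n
end

section
/- The sets S_c and Z_c are disjoint: no position recorded by the projection Π_c is a position whose entry is guaranteed to be zero for all points of Aff(c). -/
section Aux

variable {n : ℕ} {D U : Finset ℕ}

lemma gammaU_pos {u : ℕ} (hun : u ≠ n + 1) (hu : u ∈ U)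
    (h : (U.filter (fun v => v < u)).Nonempty) :
    gammaFun n D U u ∈ U ∧ gammaFun n D U u < u ∧
      ∀ v ∈ U, v < u → v ≤ gammaFun n D U u := by
  have hg : gammaFun n D U u = (U.filter (fun v => v < u)).max' h := by
    simp only [gammaFun, if_neg hun, if_pos hu]
    rw [← Finset.coe_max', WithBot.unbotD_coe]
  have hm := Finset.max'_mem _ h
  simp only [Finset.mem_filter] at hm
  refine ⟨hg ▸ hm.1, hg ▸ hm.2, ?_⟩
  intro w hw hwu
  rw [hg]
  apply Finset.le_max'
  exact Finset.mem_filter.mpr ⟨hw, hwu⟩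

lemma gammaU_zero {u : ℕ} (hun : u ≠ n + 1) (hu : u ∈ U)
    (h : ¬ (U.filter (fun v => v < u)).Nonempty) :
    gammaFun n D U u = 1 := by
  simp only [gammaFun, if_neg hun, if_pos hu]
  rw [Finset.not_nonempty_iff_eq_empty.mp h, Finset.max_empty]
  rfl

lemma gammaD {x : ℕ} (hun : x ≠ n + 1) (hx : x ∉ U) (hxn : x < n + 1) :
    gammaFun n D U x ∈ insert (n+1) D ∧ x < gammaFun n D U x ∧
      ∀ d ∈ insert (n+1) D, x < d → gammaFun n D U x ≤ d := by
  have h : ((insert (n+1) D).filter (fun d => x < d)).Nonempty :=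
    ⟨n+1, Finset.mem_filter.mpr ⟨Finset.mem_insert_self _ _, hxn⟩⟩
  have hg : gammaFun n D U x = ((insert (n+1) D).filter (fun d => x < d)).min' h := by
    simp only [gammaFun, if_neg hun, if_neg hx]
    rw [← Finset.coe_min', WithTop.untopD_coe]
  have hm := Finset.min'_mem _ h
  simp only [Finset.mem_filter] at hm
  refine ⟨hg ▸ hm.1, hg ▸ hm.2, ?_⟩
  intro e he hxe
  rw [hg]
  apply Finset.min'_le
  exact Finset.mem_filter.mpr ⟨he, hxe⟩

/-- Counting lemma: the elements of `[2, u)` split between `U` and `D`. -/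
lemma count_lt (hD : D ⊆ Finset.Icc 2 n) (hU : U = Finset.Icc 2 n \ D)
    {u : ℕ} (h2 : 2 ≤ u) (hun : u ≤ n) :
    (U.filter (fun v => v < u)).card + (D.filter (fun v => v < u)).card = u - 2 := by
  have hdisj : Disjoint (U.filter (fun v => v < u)) (D.filter (fun v => v < u)) := by
    apply Finset.disjoint_filter_filter
    rw [hU]; exact Finset.sdiff_disjoint
  have hunion : (U.filter (fun v => v < u)) ∪ (D.filter (fun v => v < u))
      = Finset.Icc 2 (u - 1) := by
    ext x
    simp only [Finset.mem_union, Finset.mem_filter, Finset.mem_Icc, hU, Finset.mem_sdiff]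
    constructor
    · rintro (⟨⟨⟨hx2, hxn⟩, _⟩, hlt⟩ | ⟨hxD, hlt⟩)
      · omega
      · have := hD hxD
        simp only [Finset.mem_Icc] at this
        omega
    · rintro ⟨hx2, hxle⟩
      by_cases hxD : x ∈ D
      · exact Or.inr ⟨hxD, by omega⟩
      · exact Or.inl ⟨⟨⟨hx2, by omega⟩, hxD⟩, by omega⟩
  have := congrArg Finset.card hunion
  rw [Finset.card_union_of_disjoint hdisj, Nat.card_Icc] at this
  omega

/-- The key invariant on iterates of `γ` starting at `u ∈ U`, for `k ≤ u - 1` steps: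
we are either still in `U` strictly below `u`, or at `1`, or in `D`, with an exact
formula for the number of steps taken. -/
lemma gamma_iter_inv (hn : 1 ≤ n) (hD : D ⊆ Finset.Icc 2 n) (hU : U = Finset.Icc 2 n \ D)
    {u : ℕ} (hu : u ∈ U) : ∀ k, 1 ≤ k → k + 1 ≤ u →
    ((gammaFun n D U)^[k] u ∈ U ∧ (gammaFun n D U)^[k] u < u ∧
      k = (U.filter (fun v => (gammaFun n D U)^[k] u ≤ v ∧ v < u)).card) ∨
    ((gammaFun n D U)^[k] u = 1 ∧ k = (U.filter (fun v => v < u)).card + 1) ∨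
    ((gammaFun n D U)^[k] u ∈ D ∧
      k = (U.filter (fun v => v < u)).card + 1 +
        (D.filter (fun v => v ≤ (gammaFun n D U)^[k] u)).card) := by
  have hUm : ∀ v ∈ U, 2 ≤ v ∧ v ≤ n ∧ v ∉ D := by
    intro v hv
    rw [hU] at hv
    simp only [Finset.mem_sdiff, Finset.mem_Icc] at hv
    tauto
  have hDm : ∀ d ∈ D, 2 ≤ d ∧ d ≤ n := by
    intro d hd
    have := hD hd
    simp only [Finset.mem_Icc] at this
    tauto
  have hu2 := hUm u hu
  have hcount := count_lt hD hU (u := u) (by omega) (by omega)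
  intro k
  induction k with
  | zero => omega
  | succ k ih =>
    intro _ hk1
    rcases Nat.eq_zero_or_pos k with rfl | hkpos
    · -- one step from u
      rw [Function.iterate_one]
      have hun : u ≠ n + 1 := by omega
      by_cases h : (U.filter (fun v => v < u)).Nonempty
      · obtain ⟨hmU, hmlt, hmax⟩ := gammaU_pos hun hu h
        left
        refine ⟨hmU, hmlt, ?_⟩
        have hset : U.filter (fun v => gammaFun n D U u ≤ v ∧ v < u)
            = {gammaFun n D U u} := by
          ext v
          simp only [Finset.mem_filter, Finset.mem_singleton]
          constructor
          · rintro ⟨hv, hle, hlt⟩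
            have := hmax v hv hlt
            omega
          · rintro rfl
            exact ⟨hmU, le_refl _, hmlt⟩
        rw [hset, Finset.card_singleton]
      · right; left
        refine ⟨gammaU_zero hun hu h, ?_⟩
        rw [Finset.not_nonempty_iff_eq_empty.mp h, Finset.card_empty]
    · have ihk := ih (by omega) (by omega)
      set x := (gammaFun n D U)^[k] u with hxdef
      rw [Function.iterate_succ_apply', ← hxdef]
      rcases ihk with ⟨hxU, hxlt, hcard⟩ | ⟨hx1, hcard⟩ | ⟨hxD, hcard⟩
      · -- x ∈ U, take one more step down inside U (or to 1)
        have hx2 := hUm x hxU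
        have hxn : x ≠ n + 1 := by omega
        by_cases h : (U.filter (fun v => v < x)).Nonempty
        · obtain ⟨hmU, hmlt, hmax⟩ := gammaU_pos hxn hxU h
          left
          refine ⟨hmU, by omega, ?_⟩
          have hset : U.filter (fun v => gammaFun n D U x ≤ v ∧ v < u)
              = insert (gammaFun n D U x) (U.filter (fun v => x ≤ v ∧ v < u)) := by
            ext v
            simp only [Finset.mem_filter, Finset.mem_insert]
            constructor
            · rintro ⟨hv, hle, hlt⟩
              by_cases hvx : x ≤ v
              · exact Or.inr ⟨hv, hvx, hlt⟩
              · have := hmax v hv (by omega)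
                left
                omega
            · rintro (rfl | ⟨hv, hge, hlt⟩)
              · exact ⟨hmU, le_refl _, by omega⟩
              · exact ⟨hv, by omega, hlt⟩
          rw [hset, Finset.card_insert_of_notMem (by
            simp only [Finset.mem_filter]
            rintro ⟨-, hle, -⟩
            omega), ← hcard]
        · right; left
          refine ⟨gammaU_zero hxn hxU h, ?_⟩
          have hempty := Finset.not_nonempty_iff_eq_empty.mp h
          have hset : U.filter (fun v => v < u) = U.filter (fun v => x ≤ v ∧ v < u) := by
            ext v
            simp only [Finset.mem_filter]
            constructor
            · rintro ⟨hv, hlt⟩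
              refine ⟨hv, ?_, hlt⟩
              by_contra hvx
              have hvmem : v ∈ U.filter (fun v => v < x) :=
                Finset.mem_filter.mpr ⟨hv, by omega⟩
              rw [hempty] at hvmem
              simp at hvmem
            · rintro ⟨hv, _, hlt⟩
              exact ⟨hv, hlt⟩
          rw [hset]
          omega
      · -- x = 1, next step goes to min of D (or to n+1, which is impossible here)
        have h1U : (1 : ℕ) ∉ U := by
          intro h1
          have := hUm 1 h1
          omega
        obtain ⟨hgmem, hglt, hgmin⟩ := gammaD (n := n) (D := D) (U := U) (x := 1)
          (by omega) h1U (by omega)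
        rw [hx1]
        rcases Finset.mem_insert.mp hgmem with hgn | hgD
        · -- γ(1) = n+1 : D is empty, forcing k too large
          exfalso
          have hDempty : D = ∅ := by
            rw [← Finset.not_nonempty_iff_eq_empty]
            rintro ⟨d, hd⟩
            have hd2 := hDm d hd
            have := hgmin d (Finset.mem_insert_of_mem hd) (by omega)
            omega
          rw [hDempty] at hcount
          simp only [Finset.filter_empty, Finset.card_empty] at hcount
          omega
        · right; right
          refine ⟨hgD, ?_⟩
          have hset : D.filter (fun v => v ≤ gammaFun n D U 1) = {gammaFun n D U 1} := by
            ext v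
            simp only [Finset.mem_filter, Finset.mem_singleton]
            constructor
            · rintro ⟨hv, hle⟩
              have h2 := hDm v hv
              have := hgmin v (Finset.mem_insert_of_mem hv) (by omega)
              omega
            · rintro rfl
              exact ⟨hgD, le_refl _⟩
          rw [hset, Finset.card_singleton]
          omega
      · -- x ∈ D, next step goes to the next element of D (or n+1, impossible here)
        have hx2 := hDm x hxD
        have hxU' : x ∉ U := fun h => (hUm x h).2.2 hxD
        obtain ⟨hgmem, hglt, hgmin⟩ := gammaD (n := n) (D := D) (U := U) (x := x)
          (by omega) hxU' (by omega)
        rcases Finset.mem_insert.mp hgmem with hgn | hgD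
        · -- γ(x) = n+1 : all of D is ≤ x, forcing k too large
          exfalso
          have hall : ∀ d ∈ D, d ≤ x := by
            intro d hd
            by_contra hdx
            have h1 := hgmin d (Finset.mem_insert_of_mem hd) (by omega)
            have := hDm d hd
            omega
          have hDfull : D.filter (fun v => v ≤ x) = D :=
            Finset.filter_true_of_mem hall
          rw [hDfull] at hcard
          have hle := Finset.card_le_card (Finset.filter_subset (fun v => v < u) D)
          omega
        · right; right
          refine ⟨hgD, ?_⟩
          have hset : D.filter (fun v => v ≤ gammaFun n D U x)
              = insert (gammaFun n D U x) (D.filter (fun v => v ≤ x)) := by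
            ext v
            simp only [Finset.mem_filter, Finset.mem_insert]
            constructor
            · rintro ⟨hv, hle⟩
              by_cases hvx : v ≤ x
              · exact Or.inr ⟨hv, hvx⟩
              · have := hgmin v (Finset.mem_insert_of_mem hv) (by omega)
                left
                omega
            · rintro (rfl | ⟨hv, hle⟩)
              · exact ⟨hgD, le_refl _⟩
              · exact ⟨hv, by omega⟩
          rw [hset, Finset.card_insert_of_notMem]
          · omega
          · simp only [Finset.mem_filter]
            push_neg
            intro _
            omega

end Aux

/-- The sets `S_c` and `Z_c` are disjoint: no position recorded by the projection `Π_c` is a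
position whose entry is guaranteed to be zero on `Aff(c)`. -/
theorem statement14 (n : ℕ) (hn : 1 ≤ n) (D U : Finset ℕ)
    (hD : D ⊆ Finset.Icc 2 n) (hU : U = Finset.Icc 2 n \ D) :
    Disjoint (ScF n D U) (ZcF n D U) := by
  have hUm : ∀ v ∈ U, 2 ≤ v ∧ v ≤ n ∧ v ∉ D := by
    intro v hv
    rw [hU] at hv
    simp only [Finset.mem_sdiff, Finset.mem_Icc] at hv
    tauto
  have hDm : ∀ d ∈ D, 2 ≤ d ∧ d ≤ n := by
    intro d hd
    have := hD hd
    simp only [Finset.mem_Icc] at this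
    tauto
  rw [Finset.disjoint_left]
  rintro ⟨i, x⟩ hp hz
  simp only [ScF, Sc1, Sc2, Sc3, Finset.mem_union, Finset.mem_biUnion, Finset.mem_image,
    Finset.mem_insert, Finset.mem_Icc, Finset.mem_filter, Prod.mk.injEq] at hp
  simp only [ZcF, Finset.mem_union, Finset.mem_biUnion, Finset.mem_image, Finset.mem_Icc,
    Prod.mk.injEq] at hz
  rcases hp with (⟨d, hd, i', ⟨hi1, hi2⟩, hie, hde⟩ | ⟨u, hu, k, ⟨hk1, hk2⟩, hie, hge⟩) |
    ⟨u, ⟨hu, hu2n⟩, i', ⟨hi1, hi2⟩, hie, hue⟩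
  · -- Sc1
    rcases hz with ⟨u', hu', i'', ⟨hj1, hj2⟩, hje, hue'⟩ | ⟨d', hd', i'', ⟨hj1, hj2⟩, hje, hde'⟩
    · -- second coordinate is in U but also in D ∪ {n+1}
      have hdu : d = u' := by omega
      rw [hdu] at hd
      have := hUm u' hu'
      rcases hd with rfl | hdD
      · omega
      · exact this.2.2 hdD
    · have hdd : d = d' := by omega
      rw [hdd] at hd
      have := hDm d' hd'
      rcases hd with heq | _
      · omega
      · omega
  · -- Sc2
    have hu2 := hUm u hu
    rcases hz with ⟨u', hu', i'', ⟨hj1, hj2⟩, hje, hue'⟩ | ⟨d', hd', i'', ⟨hj1, hj2⟩, hje, hde'⟩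
    · -- Z first family: purely numeric contradiction
      have hu'2 := hUm u' hu'
      omega
    · -- Z second family: use the invariant
      have hd'2 := hDm d' hd'
      have hinv := gamma_iter_inv hn hD hU hu k hk1 (by omega)
      have hdg : d' = (gammaFun n D U)^[k] u := by omega
      rcases hinv with ⟨hxU, _, _⟩ | ⟨hx1, _⟩ | ⟨hxD, hcard⟩
      · rw [← hdg] at hxU
        exact (hUm d' hxU).2.2 hd'
      · omega
      · rw [← hdg] at hcard
        have hcount := count_lt hD hU (u := u) (by omega) (by omega)
        by_cases hxu : d' < u
        · -- k ≥ d', but Z forces k ≤ d' - 1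
          have hsub : D.filter (fun v => v < u)
              ⊆ D.filter (fun v => v ≤ d') ∪ Finset.Icc (d' + 1) (u - 1) := by
            intro v hv
            simp only [Finset.mem_filter, Finset.mem_union, Finset.mem_Icc] at hv ⊢
            have := hDm v hv.1
            by_cases hvd : v ≤ d'
            · exact Or.inl ⟨hv.1, hvd⟩
            · exact Or.inr ⟨by omega, by omega⟩
          have hle := Finset.card_le_card hsub
          have hle2 := Finset.card_union_le (D.filter (fun v => v ≤ d'))
            (Finset.Icc (d' + 1) (u - 1))
          rw [Nat.card_Icc] at hle2
          omega
        · -- d' ≥ u : then k ≥ u, contradiction with k ≤ u - 1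
          have hsub : insert d' (D.filter (fun v => v < u)) ⊆ D.filter (fun v => v ≤ d') := by
            intro v hv
            simp only [Finset.mem_insert, Finset.mem_filter] at hv ⊢
            rcases hv with rfl | ⟨hv, hlt⟩
            · exact ⟨hd', le_refl _⟩
            · exact ⟨hv, by omega⟩
          have hle := Finset.card_le_card hsub
          rw [Finset.card_insert_of_notMem (by
            simp only [Finset.mem_filter]
            push_neg
            intro _
            omega)] at hle
          omega
  · -- Sc3
    rcases hz with ⟨u', hu', i'', ⟨hj1, hj2⟩, hje, hue'⟩ | ⟨d', hd', i'', ⟨hj1, hj2⟩, hje, hde'⟩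
    · have : u = u' := by omega
      subst this
      omega
    · have : u = d' := by omega
      subst this
      exact (hUm u hu).2.2 hd'
end

section
/- For every 1 ≤ k ≤ s the permutation u^(k) satisfies: u^(k)(n+2−j) = j for each j with u_k ≤ j ≤ n+1; u^(k)(n+2−a−k) = d_a for each a with 0 ≤ a ≤ r and d_a < u_k (where d_0 = 1); and u^(k)(n+2+a−k) = u_a for each a with 1 ≤ a ≤ s and u_a < u_k. -/
/-- The `a`-th lower-barred number, 1-indexed, with the conventions `d_0 = 1` and
`d_{r+1} = n+1`. -/
def dVal (n : ℕ) (D : Finset ℕ) (a : ℕ) : ℕ :=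
  if a = 0 then 1 else ((D.sort (· ≤ ·)) ++ [n + 1]).getD (a - 1) 0

/-- The `a`-th upper-barred number, 1-indexed. -/
def uVal (U : Finset ℕ) (a : ℕ) : ℕ := (U.sort (· ≤ ·)).getD (a - 1) 0

/-- The factor `s_{d-1} s_{d-2} ⋯ s_2 s_1` (permutations composed as functions, `s_i` being
the adjacent transposition of `i` and `i+1`). -/
def runFactorD (d : ℕ) : Equiv.Perm ℕ :=
  (((List.range (d - 1)).reverse).map (fun j => Equiv.swap (j + 1) (j + 2))).prod

/-- The permutation `d^(k)`: the product, left to right over `a = 1, …, k`, of the factors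
`s_{d_a-1} s_{d_a-2} ⋯ s_2 s_1`. -/
def dPerm (n : ℕ) (D : Finset ℕ) (k : ℕ) : Equiv.Perm ℕ :=
  ((((D.sort (· ≤ ·)) ++ [n + 1]).take k).map runFactorD).prod

/-- The factor `s_n s_{n-1} ⋯ s_{n-u+2}`. -/
def runFactorU (n u : ℕ) : Equiv.Perm ℕ :=
  ((List.range (u - 1)).map (fun j => Equiv.swap (n - j) (n - j + 1))).prod

/-- The permutation `u^(k)`: `d^(r+1)` multiplied on the right by the product, taken over
`a = s, s-1, …, k` in decreasing order, of the factors `s_n s_{n-1} ⋯ s_{n-u_a+2}`. -/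
def uPerm (n : ℕ) (D U : Finset ℕ) (k : ℕ) : Equiv.Perm ℕ :=
  dPerm n D (D.card + 1) *
    ((((U.sort (· ≤ ·)).drop (k - 1)).reverse.map (runFactorU n)).prod)


/-- 1-indexed element of the sorted list of a finset (auxiliary). -/
def ev (S : Finset ℕ) (a : ℕ) : ℕ := (S.sort (· ≤ ·)).getD (a - 1) 0

section evlemmas
lemma ev_eq (S : Finset ℕ) {a : ℕ} (h1 : 1 ≤ a) (h2 : a ≤ S.card) :
    ev S a = S.orderEmbOfFin rfl ⟨a - 1, by omega⟩ := by
  have h : a - 1 < (S.sort (· ≤ ·)).length := by rw [Finset.length_sort]; omega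
  rw [ev, List.getD_eq_getElem _ _ h]
  rfl

lemma ev_mem (S : Finset ℕ) {a : ℕ} (h1 : 1 ≤ a) (h2 : a ≤ S.card) : ev S a ∈ S := by
  rw [ev_eq S h1 h2]; exact Finset.orderEmbOfFin_mem _ _ _

lemma ev_lt_ev (S : Finset ℕ) {a b : ℕ} (h1 : 1 ≤ a) (h : a < b) (h2 : b ≤ S.card) :
    ev S a < ev S b := by
  rw [ev_eq S h1 (by omega), ev_eq S (by omega) h2]
  exact (S.orderEmbOfFin rfl).strictMono (by simp [Fin.lt_def]; omega)

lemma ev_le_ev (S : Finset ℕ) {a b : ℕ} (h1 : 1 ≤ a) (h : a ≤ b) (h2 : b ≤ S.card) :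
    ev S a ≤ ev S b := by
  rcases eq_or_lt_of_le h with rfl | h'
  · exact le_refl _
  · exact (ev_lt_ev S h1 h' h2).le

lemma card_filter_lt_orderEmb (S : Finset ℕ) (i : Fin S.card) :
    (S.filter (· < S.orderEmbOfFin rfl i)).card = i := by
  classical
  have hrange : ∀ x, x ∈ S ↔ ∃ j, S.orderEmbOfFin rfl j = x := by
    intro x
    rw [← Finset.mem_coe, ← Finset.range_orderEmbOfFin S rfl]
    exact ⟨fun ⟨j, hj⟩ => ⟨j, hj⟩, fun ⟨j, hj⟩ => ⟨j, hj⟩⟩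
  have hset : S.filter (· < S.orderEmbOfFin rfl i)
      = (Finset.Iio i).image (fun j => S.orderEmbOfFin rfl j) := by
    ext x
    simp only [Finset.mem_filter, Finset.mem_image, Finset.mem_Iio]
    constructor
    · rintro ⟨hxS, hlt⟩
      obtain ⟨j, rfl⟩ := (hrange x).1 hxS
      exact ⟨j, (S.orderEmbOfFin rfl).lt_iff_lt.1 hlt, rfl⟩
    · rintro ⟨j, hj, rfl⟩
      exact ⟨(hrange _).2 ⟨j, rfl⟩, (S.orderEmbOfFin rfl).lt_iff_lt.2 hj⟩
  rw [hset, Finset.card_image_of_injective _ (S.orderEmbOfFin rfl).injective, Fin.card_Iio]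

lemma cnt_ev (S : Finset ℕ) {a : ℕ} (h1 : 1 ≤ a) (h2 : a ≤ S.card) :
    (S.filter (· < ev S a)).card = a - 1 := by
  rw [ev_eq S h1 h2, card_filter_lt_orderEmb]

lemma ev_cnt (S : Finset ℕ) {v : ℕ} (hv : v ∈ S) :
    ev S ((S.filter (· < v)).card + 1) = v := by
  have hrange : ∃ j, S.orderEmbOfFin rfl j = v := by
    have := (Finset.range_orderEmbOfFin S rfl)
    rw [← Finset.mem_coe, ← this] at hv
    exact hv
  obtain ⟨j, rfl⟩ := hrange
  rw [card_filter_lt_orderEmb]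
  rw [ev_eq S (by omega) (by omega)]
  congr 1

lemma cnt_mono (S : Finset ℕ) {v w : ℕ} (h : v ≤ w) :
    (S.filter (· < v)).card ≤ (S.filter (· < w)).card :=
  Finset.card_le_card (by intro x hx; simp only [Finset.mem_filter] at hx ⊢; exact ⟨hx.1, by omega⟩)

lemma cnt_succ_of_mem (S : Finset ℕ) {v w : ℕ} (hv : v ∈ S) (h : v < w) :
    (S.filter (· < v)).card + 1 ≤ (S.filter (· < w)).card := by
  classical
  have hsub : insert v (S.filter (· < v)) ⊆ S.filter (· < w) := by
    intro x hx
    rcases Finset.mem_insert.1 hx with rfl | hx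
    · exact Finset.mem_filter.2 ⟨hv, by simpa using h⟩
    · simp only [Finset.mem_filter] at hx ⊢; exact ⟨hx.1, by omega⟩
  have hnot : v ∉ S.filter (· < v) := by simp
  calc (S.filter (· < v)).card + 1 = (insert v (S.filter (· < v))).card :=
        (Finset.card_insert_of_notMem hnot).symm
    _ ≤ _ := Finset.card_le_card hsub

lemma cnt_lt_card (S : Finset ℕ) {v : ℕ} (hv : v ∈ S) :
    (S.filter (· < v)).card < S.card := by
  apply Finset.card_lt_card
  refine ⟨Finset.filter_subset _ _, fun h => ?_⟩
  have := h hv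
  simp at this
end evlemmas

section runlemmas
lemma runFactorD_succ (d : ℕ) (hd : 1 ≤ d) :
    runFactorD (d + 1) = Equiv.swap d (d + 1) * runFactorD d := by
  obtain ⟨m, rfl⟩ : ∃ m, d = m + 1 := ⟨d - 1, by omega⟩
  simp only [runFactorD]
  rw [show m + 1 + 1 - 1 = m + 1 from rfl, List.range_succ]
  simp [List.map_append, List.prod_append]

lemma rD_fix (d : ℕ) : ∀ x, d < x → runFactorD d x = x := by
  induction d with
  | zero => intro x _; simp [runFactorD]
  | succ d ih =>
    intro x hx
    rcases Nat.eq_zero_or_pos d with rfl | hd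
    · simp [runFactorD]
    · rw [runFactorD_succ d hd]
      simp only [Equiv.Perm.mul_apply]
      rw [ih x (by omega), Equiv.swap_apply_of_ne_of_ne (by omega) (by omega)]

lemma rD_one (d : ℕ) (hd : 1 ≤ d) : runFactorD d 1 = d := by
  induction d with
  | zero => omega
  | succ d ih =>
    rcases Nat.eq_zero_or_pos d with rfl | hd'
    · simp [runFactorD]
    · rw [runFactorD_succ d hd', Equiv.Perm.mul_apply, ih hd', Equiv.swap_apply_left]

lemma rD_mid (d : ℕ) : ∀ x, 2 ≤ x → x ≤ d → runFactorD d x = x - 1 := by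
  induction d with
  | zero => intro x h1 h2; omega
  | succ d ih =>
    intro x h1 h2
    rcases Nat.eq_zero_or_pos d with rfl | hd
    · omega
    · rw [runFactorD_succ d hd, Equiv.Perm.mul_apply]
      rcases Nat.lt_or_ge x (d + 1) with h | h
      · rw [ih x h1 (by omega), Equiv.swap_apply_of_ne_of_ne (by omega) (by omega)]
      · have hx : x = d + 1 := by omega
        subst hx
        rw [rD_fix d (d + 1) (by omega), Equiv.swap_apply_right]
        omega

lemma runFactorU_succ (n u : ℕ) (hu : 1 ≤ u) :
    runFactorU n (u + 1) = runFactorU n u * Equiv.swap (n - (u - 1)) (n - (u - 1) + 1) := by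
  simp only [runFactorU]
  rw [show u + 1 - 1 = (u - 1) + 1 by omega, List.range_succ]
  simp [List.map_append, List.prod_append]

lemma rU_fix_low (n u : ℕ) (hu : u ≤ n) : ∀ x, x ≤ n + 1 - u → runFactorU n u x = x := by
  induction u with
  | zero => intro x _; simp [runFactorU]
  | succ u ih =>
    intro x hx
    rcases Nat.eq_zero_or_pos u with rfl | hu'
    · simp [runFactorU]
    · rw [runFactorU_succ n u hu', Equiv.Perm.mul_apply,
        Equiv.swap_apply_of_ne_of_ne (by omega) (by omega), ih (by omega) x (by omega)]

lemma rU_fix_high (n u : ℕ) (hu : u ≤ n) : ∀ x, n + 2 ≤ x → runFactorU n u x = x := by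
  induction u with
  | zero => intro x _; simp [runFactorU]
  | succ u ih =>
    intro x hx
    rcases Nat.eq_zero_or_pos u with rfl | hu'
    · simp [runFactorU]
    · rw [runFactorU_succ n u hu', Equiv.Perm.mul_apply,
        Equiv.swap_apply_of_ne_of_ne (by omega) (by omega), ih (by omega) x hx]

lemma rU_top (n : ℕ) : ∀ u, 1 ≤ u → u ≤ n → runFactorU n u (n + 2 - u) = n + 1 := by
  intro u
  induction u with
  | zero => omega
  | succ u ih =>
    intro _ hu
    rcases Nat.eq_zero_or_pos u with rfl | hu'
    · have : n + 2 - 1 = n + 1 := by omega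
      simp [runFactorU, this]
    · rw [runFactorU_succ n u hu', Equiv.Perm.mul_apply,
        show n + 2 - (u + 1) = n - (u - 1) by omega, Equiv.swap_apply_left,
        show n - (u - 1) + 1 = n + 2 - u by omega, ih hu' (by omega)]

lemma rU_dec (n : ℕ) : ∀ u, u ≤ n → ∀ x, n + 3 - u ≤ x → x ≤ n + 1 → runFactorU n u x = x - 1 := by
  intro u
  induction u with
  | zero => intro _ x h1 h2; omega
  | succ u ih =>
    intro hu x h1 h2
    rcases Nat.eq_zero_or_pos u with rfl | hu'
    · omega
    · rw [runFactorU_succ n u hu', Equiv.Perm.mul_apply]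
      rcases Nat.lt_or_ge (n + 2 - u) x with h | h
      · rw [Equiv.swap_apply_of_ne_of_ne (by omega) (by omega), ih (by omega) x (by omega) h2]
      · have hx : x = n + 2 - u := by omega
        subst hx
        rw [show n + 2 - u = n - (u - 1) + 1 by omega, Equiv.swap_apply_right,
          show n - (u - 1) = n + 1 - u by omega]
        rw [rU_fix_low n u (by omega) _ (by omega)]
        omega
end runlemmas

section main

variable {n : ℕ} {D U : Finset ℕ}

lemma uVal_eq_ev (a : ℕ) : uVal U a = ev U a := rfl

lemma dVal_zero : dVal n D 0 = 1 := by simp [dVal]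

lemma dVal_mid {a : ℕ} (h1 : 1 ≤ a) (h2 : a ≤ D.card) : dVal n D a = ev D a := by
  rw [dVal, if_neg (by omega), ev,
    List.getD_append _ _ _ _ (by rw [Finset.length_sort]; omega)]

lemma dVal_top : dVal n D (D.card + 1) = n + 1 := by
  rw [dVal, if_neg (by omega),
    List.getD_append_right _ _ _ _ (by rw [Finset.length_sort]; omega)]
  simp

lemma dVal_mem {a : ℕ} (h1 : 1 ≤ a) (h2 : a ≤ D.card) : dVal n D a ∈ D := by
  rw [dVal_mid h1 h2]; exact ev_mem D h1 h2

variable (hn : 1 ≤ n) (hD : D ⊆ Finset.Icc 2 n) (hU : U = Finset.Icc 2 n \ D)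

include hD in
lemma dVal_bound {a : ℕ} (h1 : 1 ≤ a) (h2 : a ≤ D.card) :
    2 ≤ dVal n D a ∧ dVal n D a ≤ n := by
  have := hD (dVal_mem (n := n) h1 h2)
  simpa [Finset.mem_Icc] using this

include hn hD in
lemma dVal_lt {a b : ℕ} (h1 : a < b) (h2 : b ≤ D.card + 1) : dVal n D a < dVal n D b := by
  rcases Nat.lt_or_ge b (D.card + 1) with hb | hb
  · -- b ≤ D.card
    have hb' : b ≤ D.card := by omega
    rcases Nat.eq_zero_or_pos a with rfl | ha
    · rw [dVal_zero]
      have := (dVal_bound hD (by omega) hb').1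
      omega
    · rw [dVal_mid ha (by omega), dVal_mid (by omega) hb']
      exact ev_lt_ev D ha h1 hb'
  · have hb' : b = D.card + 1 := by omega
    subst hb'
    rw [dVal_top]
    rcases Nat.eq_zero_or_pos a with rfl | ha
    · rw [dVal_zero]; omega
    · have := (dVal_bound hD ha (by omega)).2
      omega

include hn hD in
lemma dVal_le {a b : ℕ} (h1 : a ≤ b) (h2 : b ≤ D.card + 1) : dVal n D a ≤ dVal n D b := by
  rcases eq_or_lt_of_le h1 with rfl | h
  · exact le_refl _
  · exact (dVal_lt hn hD h h2).le

include hn hD in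
lemma dVal_ge {a : ℕ} (h2 : a ≤ D.card + 1) : a + 1 ≤ dVal n D a := by
  induction a with
  | zero => rw [dVal_zero]
  | succ a ih =>
    show a + 1 + 1 ≤ dVal n D (a + 1)
    have := ih (by omega)
    have := dVal_lt hn hD (show a < a + 1 by omega) (show a + 1 ≤ D.card + 1 by omega)
    omega

include hn hD in
lemma dVal_le_top {a : ℕ} (h2 : a ≤ D.card + 1) : dVal n D a ≤ n + 1 := by
  have := dVal_le hn hD h2 (le_refl _)
  rwa [dVal_top] at this

include hD in
lemma cardU (hU : U = Finset.Icc 2 n \ D) : U.card = n - 1 - D.card := by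
  rw [hU, Finset.card_sdiff_of_subset hD, Nat.card_Icc]
  omega

include hD in
lemma cardD_le : D.card ≤ n - 1 := by
  have := Finset.card_le_card hD
  rw [Nat.card_Icc] at this
  omega

include hD hU in
lemma cnt_sum {v : ℕ} (hv2 : 2 ≤ v) (hvn : v ≤ n + 1) :
    (D.filter (· < v)).card + (U.filter (· < v)).card = v - 2 := by
  classical
  have hIcc : ((Finset.Icc 2 n).filter (· < v)).card = v - 2 := by
    have heq : (Finset.Icc 2 n).filter (· < v) = Finset.Icc 2 (v - 1) := by
      ext x
      simp only [Finset.mem_filter, Finset.mem_Icc]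
      omega
    rw [heq, Nat.card_Icc]
    omega
  have hsub : U.filter (· < v) = ((Finset.Icc 2 n).filter (· < v)) \ (D.filter (· < v)) := by
    rw [hU]
    ext x
    simp only [Finset.mem_filter, Finset.mem_sdiff]
    tauto
  have hDsub : D.filter (· < v) ⊆ (Finset.Icc 2 n).filter (· < v) :=
    Finset.filter_subset_filter _ hD
  have hle := Finset.card_le_card hDsub
  rw [hsub, Finset.card_sdiff_of_subset hDsub]
  omega

include hn hD in
lemma dVal_min {v : ℕ} (hv : v ∈ D) : dVal n D 1 ≤ v := by
  have h1 : 1 ≤ (D.filter (· < v)).card + 1 := by omega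
  have h2 : (D.filter (· < v)).card + 1 ≤ D.card := cnt_lt_card D hv
  have := ev_cnt D hv
  rw [dVal_mid (le_refl 1) (by omega)]
  calc ev D 1 ≤ ev D ((D.filter (· < v)).card + 1) := ev_le_ev D (le_refl 1) h1 h2
    _ = v := this

include hn hD in
lemma cD_dVal {a : ℕ} (h1 : 1 ≤ a) (h2 : a ≤ D.card + 1) :
    (D.filter (· < dVal n D a)).card = a - 1 := by
  rcases Nat.lt_or_ge a (D.card + 1) with ha | ha
  · rw [dVal_mid h1 (by omega)]
    exact cnt_ev D h1 (by omega)
  · have ha' : a = D.card + 1 := by omega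
    subst ha'
    rw [dVal_top]
    have : D.filter (· < n + 1) = D := by
      apply Finset.filter_true_of_mem
      intro x hx
      have := hD hx
      simp only [Finset.mem_Icc] at this
      omega
    rw [this]
    omega

include hn hD in
lemma mem_D_index {v : ℕ} (hv : v ∈ D) :
    v = dVal n D ((D.filter (· < v)).card + 1) ∧ (D.filter (· < v)).card + 1 ≤ D.card := by
  have h2 := cnt_lt_card D hv
  constructor
  · rw [dVal_mid (by omega) (by omega)]
    exact (ev_cnt D hv).symm
  · omega

include hU in
lemma uVal_mem {a : ℕ} (h1 : 1 ≤ a) (h2 : a ≤ U.card) :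
    uVal U a ∈ U ∧ 2 ≤ uVal U a ∧ uVal U a ≤ n := by
  subst hU
  have hm := ev_mem (Finset.Icc 2 n \ D) h1 h2
  have h' := (Finset.mem_sdiff.1 hm).1
  simp only [Finset.mem_Icc] at h'
  exact ⟨hm, h'.1, h'.2⟩

lemma uVal_lt_uVal {a b : ℕ} (h1 : 1 ≤ a) (h : a < b) (h2 : b ≤ U.card) :
    uVal U a < uVal U b := ev_lt_ev U h1 h h2

lemma cU_uVal {a : ℕ} (h1 : 1 ≤ a) (h2 : a ≤ U.card) :
    (U.filter (· < uVal U a)).card = a - 1 := cnt_ev U h1 h2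

lemma mem_U_index {v : ℕ} (hv : v ∈ U) :
    v = uVal U ((U.filter (· < v)).card + 1) ∧ (U.filter (· < v)).card + 1 ≤ U.card := by
  have h2 := cnt_lt_card U hv
  exact ⟨(ev_cnt U hv).symm, by omega⟩

/-! ### dPerm lemmas -/

lemma dPerm_zero : dPerm n D 0 = 1 := by simp [dPerm]

lemma dPerm_succ {k : ℕ} (hk : k < D.card + 1) :
    dPerm n D (k + 1) = dPerm n D k * runFactorD (dVal n D (k + 1)) := by
  have hlen : ((D.sort (· ≤ ·)) ++ [n + 1]).length = D.card + 1 := by simp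
  have hklen : k < ((D.sort (· ≤ ·)) ++ [n + 1]).length := by omega
  unfold dPerm
  rw [List.map_take, List.map_take, List.prod_take_succ _ _ (by simpa using hklen)]
  congr 2
  rw [List.getElem_map]
  rw [dVal, if_neg (by omega), Nat.add_sub_cancel, List.getD_eq_getElem _ _ (by omega)]

include hn hD hU in
lemma dPerm_spec : ∀ k, 1 ≤ k → k ≤ D.card + 1 →
    (dPerm n D k 1 = dVal n D k) ∧
    (∀ j, 1 ≤ j → j ≤ k → dPerm n D k (1 + j) = dVal n D (k - j)) ∧
    (∀ j, 1 ≤ j → k + 1 + j ≤ dVal n D k → dPerm n D k (k + 1 + j) = uVal U j) ∧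
    (∀ x, dVal n D k < x → dPerm n D k x = x) := by
  intro k
  induction k with
  | zero => omega
  | succ k ih =>
    intro _ hk2
    rcases Nat.eq_zero_or_pos k with rfl | hk
    · -- base case k = 1
      simp only [Nat.zero_add] at hk2 ⊢
      have hP : dPerm n D 1 = runFactorD (dVal n D 1) := by
        rw [show (1 : ℕ) = 0 + 1 from rfl, dPerm_succ (by omega), dPerm_zero, one_mul]
      have hd1 : 2 ≤ dVal n D 1 := by have := dVal_ge hn hD (a := 1) hk2; omega
      have hd1' : dVal n D 1 ≤ n + 1 := dVal_le_top hn hD hk2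
      refine ⟨?_, ?_, ?_, ?_⟩
      · rw [hP]; exact rD_one _ (by omega)
      · intro j hj1 hj2
        have hj : j = 1 := by omega
        subst hj
        rw [hP, rD_mid _ _ (by omega) (by omega)]
        simp [dVal_zero]
      · intro j hj1 hj2
        rw [hP, rD_mid _ _ (by omega) (by omega)]
        have hv2 : (2:ℕ) ≤ 1 + j := by omega
        have hvn : 1 + j ≤ n := by omega
        have hvU : 1 + j ∈ U := by
          rw [hU, Finset.mem_sdiff, Finset.mem_Icc]
          refine ⟨⟨hv2, hvn⟩, fun hmem => ?_⟩
          have := dVal_min hn hD hmem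
          omega
        have hcD : (D.filter (· < 1 + j)).card = 0 := by
          rw [Finset.card_eq_zero, Finset.filter_eq_empty_iff]
          intro x hx
          have := dVal_min hn hD hx
          omega
        have hsum := cnt_sum hD hU hv2 (by omega)
        have hcU : (U.filter (· < 1 + j)).card = j - 1 := by omega
        obtain ⟨hidx, _⟩ := mem_U_index hvU
        rw [hcU] at hidx
        rw [show j - 1 + 1 = j by omega] at hidx
        rw [← hidx]
        omega
      · intro x hx
        rw [hP]
        exact rD_fix _ x hx
    · -- inductive step
      obtain ⟨IH1, IH2, IH3, IH4⟩ := ih hk (by omega)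
      have hstep : dPerm n D (k + 1) = dPerm n D k * runFactorD (dVal n D (k + 1)) :=
        dPerm_succ (by omega)
      have hlt : dVal n D k < dVal n D (k + 1) := dVal_lt hn hD (by omega) hk2
      have hge : k + 2 ≤ dVal n D (k + 1) := dVal_ge hn hD hk2
      have htop : dVal n D (k + 1) ≤ n + 1 := dVal_le_top hn hD hk2
      refine ⟨?_, ?_, ?_, ?_⟩
      · rw [hstep, Equiv.Perm.mul_apply, rD_one _ (by omega)]
        exact IH4 _ hlt
      · intro j hj1 hj2
        rw [hstep, Equiv.Perm.mul_apply, rD_mid _ _ (by omega) (by omega)]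
        have hx : 1 + j - 1 = j := by omega
        rw [hx]
        rcases eq_or_lt_of_le hj1 with rfl | hj
        · rw [show k + 1 - 1 = k by omega]
          exact IH1
        · have := IH2 (j - 1) (by omega) (by omega)
          rw [show 1 + (j - 1) = j by omega] at this
          rw [this]
          congr 1
          omega
      · intro j hj1 hj2
        rw [hstep, Equiv.Perm.mul_apply, rD_mid _ _ (by omega) (by omega)]
        rw [show k + 1 + 1 + j - 1 = k + 1 + j by omega]
        rcases le_or_gt (k + 1 + j) (dVal n D k) with hle | hgt
        · exact IH3 j hj1 hle
        · rw [IH4 _ hgt]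
          -- k+1+j lies strictly between dVal k and dVal (k+1); show it's in U
          set v := k + 1 + j with hv
          have hv2 : 2 ≤ v := by omega
          have hvn : v ≤ n := by omega
          have hvD : v ∉ D := by
            intro hmem
            obtain ⟨hidx, hile⟩ := mem_D_index hn hD hmem
            set a := (D.filter (· < v)).card + 1 with ha
            have h1 : ¬ (a ≤ k) := by
              intro h
              have := dVal_le hn hD h (by omega)
              omega
            have h2 : dVal n D (k + 1) ≤ dVal n D a := dVal_le hn hD (by omega) (by omega)
            omega
          have hvU : v ∈ U := by
            rw [hU, Finset.mem_sdiff, Finset.mem_Icc]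
            exact ⟨⟨hv2, hvn⟩, hvD⟩
          have hcDle : (D.filter (· < v)).card ≤ k := by
            have h1 := cnt_mono D (show v ≤ dVal n D (k + 1) by omega)
            have h2 := cD_dVal hn hD (show 1 ≤ k + 1 by omega) hk2
            omega
          have hcDge : k ≤ (D.filter (· < v)).card := by
            have hkD : dVal n D k ∈ D := dVal_mem hk (by omega)
            have := cnt_succ_of_mem D hkD hgt
            have h2 := cD_dVal hn hD hk (by omega)
            omega
          have hsum := cnt_sum hD hU hv2 (by omega)
          have hcU : (U.filter (· < v)).card = j - 1 := by omega
          obtain ⟨hidx, _⟩ := mem_U_index hvU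
          rw [hcU, show j - 1 + 1 = j by omega] at hidx
          exact hidx
      · intro x hx
        rw [hstep, Equiv.Perm.mul_apply, rD_fix _ x (by omega), IH4 x (by omega)]


/-! ### uPerm lemmas -/

lemma uPerm_last : uPerm n D U (U.card + 1) = dPerm n D (D.card + 1) := by
  unfold uPerm
  rw [Nat.add_sub_cancel]
  have hnil : (U.sort (· ≤ ·)).drop U.card = [] :=
    List.drop_eq_nil_of_le (by simp)
  rw [hnil]
  simp

lemma uPerm_step {k : ℕ} (hk1 : 1 ≤ k) (hk2 : k ≤ U.card) :
    uPerm n D U k = uPerm n D U (k + 1) * runFactorU n (uVal U k) := by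
  unfold uPerm
  rw [Nat.add_sub_cancel]
  have hlen : k - 1 < (U.sort (· ≤ ·)).length := by
    rw [Finset.length_sort]; omega
  rw [List.drop_eq_getElem_cons hlen, show k - 1 + 1 = k by omega]
  have hval : (U.sort (· ≤ ·))[k - 1]'hlen = uVal U k := by
    rw [uVal, List.getD_eq_getElem _ _ hlen]
  rw [List.reverse_cons, List.map_append, List.prod_append, mul_assoc]
  simp [hval]

include hn hD hU in
lemma uPerm_spec : ∀ m k, k + m = U.card + 1 → 1 ≤ k →
    (∀ j, (if k ≤ U.card then uVal U k else n + 1) ≤ j → j ≤ n + 1 →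
      uPerm n D U k (n + 2 - j) = j) ∧
    (∀ a, a ≤ D.card → dVal n D a < (if k ≤ U.card then uVal U k else n + 1) →
      uPerm n D U k (n + 2 - a - k) = dVal n D a) ∧
    (∀ a, 1 ≤ a → a ≤ U.card → uVal U a < (if k ≤ U.card then uVal U k else n + 1) →
      uPerm n D U k (n + 2 + a - k) = uVal U a) := by
  intro m
  induction m with
  | zero =>
    intro k hkm hk1
    have hk : k = U.card + 1 := by omega
    subst hk
    simp only [if_neg (show ¬ (U.card + 1 ≤ U.card) by omega)]
    obtain ⟨H1, H2, H3, H4⟩ := dPerm_spec hn hD hU (D.card + 1) (by omega) (le_refl _)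
    have hs : U.card = n - 1 - D.card := cardU hD hU
    have hdle : D.card ≤ n - 1 := cardD_le hD
    have hP : uPerm n D U (U.card + 1) = dPerm n D (D.card + 1) := uPerm_last
    refine ⟨?_, ?_, ?_⟩
    · intro j hj1 hj2
      have hj : j = n + 1 := by omega
      subst hj
      rw [hP, show n + 2 - (n + 1) = 1 by omega, H1, dVal_top]
    · intro a ha _
      rw [hP]
      have hpos : n + 2 - a - (U.card + 1) = 1 + (D.card + 1 - a) := by omega
      rw [hpos, H2 (D.card + 1 - a) (by omega) (by omega)]
      congr 1
      omega
    · intro a ha1 ha2 _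
      rw [hP]
      have hpos : n + 2 + a - (U.card + 1) = D.card + 1 + 1 + a := by omega
      rw [hpos, H3 a ha1 (by rw [dVal_top]; omega)]
  | succ m ih =>
    intro k hkm hk1
    have hks : k ≤ U.card := by omega
    simp only [if_pos hks]
    obtain ⟨IH1, IH2, IH3⟩ := ih (k + 1) (by omega) (by omega)
    obtain ⟨hqU, hq2, hqn⟩ := uVal_mem hU hk1 hks
    have hcUq : (U.filter (· < uVal U k)).card = k - 1 := cU_uVal hk1 hks
    have hsumq := cnt_sum hD hU hq2 (by omega)
    have hqk : k + 1 ≤ uVal U k := by omega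
    have hstep : uPerm n D U k = uPerm n D U (k + 1) * runFactorU n (uVal U k) :=
      uPerm_step hk1 hks
    have hqm : uVal U k < (if k + 1 ≤ U.card then uVal U (k + 1) else n + 1) := by
      rcases le_or_gt (k + 1) U.card with h | h
      · rw [if_pos h]; exact uVal_lt_uVal hk1 (by omega) h
      · rw [if_neg (by omega)]; omega
    refine ⟨?_, ?_, ?_⟩
    · intro j hj1 hj2
      rcases eq_or_lt_of_le hj1 with heq | hjq
      · subst heq
        rw [hstep, Equiv.Perm.mul_apply, rU_top n (uVal U k) (by omega) hqn]
        have h3 := IH3 k hk1 hks hqm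
        rw [show n + 2 + k - (k + 1) = n + 1 by omega] at h3
        exact h3
      · have hfix : runFactorU n (uVal U k) (n + 2 - j) = n + 2 - j :=
          rU_fix_low n (uVal U k) hqn _ (by omega)
        rw [hstep, Equiv.Perm.mul_apply, hfix]
        rcases le_or_gt (if k + 1 ≤ U.card then uVal U (k + 1) else n + 1) j with hge | hlt
        · exact IH1 j hge hj2
        · have hjn : j ≤ n := by
            rcases le_or_gt (k + 1) U.card with h | h
            · rw [if_pos h] at hlt
              have := (uVal_mem hU (show 1 ≤ k + 1 by omega) h).2.2
              omega
            · rw [if_neg (by omega)] at hlt; omega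
          have hcUj_ge : k ≤ (U.filter (· < j)).card := by
            have := cnt_succ_of_mem U hqU hjq
            omega
          have hcUj_le : (U.filter (· < j)).card ≤ k := by
            rcases le_or_gt (k + 1) U.card with h | h
            · rw [if_pos h] at hlt
              have h1 := cnt_mono U (show j ≤ uVal U (k + 1) by omega)
              have h2 := cU_uVal (show 1 ≤ k + 1 by omega) h
              omega
            · have hf := Finset.card_filter_le U (· < j)
              omega
          have hjU : j ∉ U := by
            intro hjmem
            obtain ⟨hidx, hle⟩ := mem_U_index hjmem
            have hcU : (U.filter (· < j)).card = k := by omega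
            rw [hcU] at hidx hle
            rw [if_pos hle] at hlt
            omega
          have hjD : j ∈ D := by
            by_contra hjDn
            exact hjU (by rw [hU, Finset.mem_sdiff, Finset.mem_Icc]
                          exact ⟨⟨by omega, hjn⟩, hjDn⟩)
          obtain ⟨hidx, hle⟩ := mem_D_index hn hD hjD
          have hsumj := cnt_sum hD hU (show 2 ≤ j by omega) (by omega)
          have hcU : (U.filter (· < j)).card = k := by omega
          have h2 := IH2 ((D.filter (· < j)).card + 1) (by omega)
            (by rw [← hidx]; exact hlt)
          rw [← hidx] at h2
          rw [show n + 2 - ((D.filter (· < j)).card + 1) - (k + 1) = n + 2 - j by omega] at h2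
          exact h2
    · intro a ha hda
      have haq : a + k + 1 ≤ uVal U k := by
        rcases Nat.eq_zero_or_pos a with rfl | hapos
        · omega
        · have hmem := dVal_mem (n := n) hapos ha
          have h1 := cnt_succ_of_mem D hmem hda
          have h2 := cD_dVal hn hD hapos (by omega)
          omega
      have hdec : runFactorU n (uVal U k) (n + 2 - a - k) = n + 2 - a - k - 1 :=
        rU_dec n (uVal U k) hqn _ (by omega) (by omega)
      rw [hstep, Equiv.Perm.mul_apply, hdec]
      have h2 := IH2 a ha (lt_trans hda hqm)
      rw [show n + 2 - a - (k + 1) = n + 2 - a - k - 1 by omega] at h2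
      exact h2
    · intro a ha1 ha2 hua
      have hak : a < k := by
        rcases le_or_gt k a with h | h
        · have := ev_le_ev U hk1 h ha2
          rw [← uVal_eq_ev, ← uVal_eq_ev] at this
          omega
        · exact h
      have hdec : runFactorU n (uVal U k) (n + 2 + a - k) = n + 2 + a - k - 1 :=
        rU_dec n (uVal U k) hqn _ (by omega) (by omega)
      rw [hstep, Equiv.Perm.mul_apply, hdec]
      have h3 := IH3 a ha1 ha2 (lt_trans hua hqm)
      rw [show n + 2 + a - (k + 1) = n + 2 + a - k - 1 by omega] at h3
      exact h3

end main


/-- For `1 ≤ k ≤ s`: `u^(k)(n+2-j) = j` for `u_k ≤ j ≤ n+1`; `u^(k)(n+2-a-k) = d_a` for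
`0 ≤ a ≤ r` with `d_a < u_k` (where `d_0 = 1`); and `u^(k)(n+2+a-k) = u_a` for `1 ≤ a ≤ s`
with `u_a < u_k`. -/
theorem statement18 (n : ℕ) (hn : 1 ≤ n) (D U : Finset ℕ)
    (hD : D ⊆ Finset.Icc 2 n) (hU : U = Finset.Icc 2 n \ D)
    (k : ℕ) (hk1 : 1 ≤ k) (hk2 : k ≤ U.card) :
    (∀ j : ℕ, uVal U k ≤ j → j ≤ n + 1 → uPerm n D U k (n + 2 - j) = j) ∧
    (∀ a : ℕ, a ≤ D.card → dVal n D a < uVal U k →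
      uPerm n D U k (n + 2 - a - k) = dVal n D a) ∧
    (∀ a : ℕ, 1 ≤ a → a ≤ U.card → uVal U a < uVal U k →
      uPerm n D U k (n + 2 + a - k) = uVal U a) := by
  obtain ⟨H1, H2, H3⟩ := uPerm_spec hn hD hU (U.card + 1 - k) k (by omega) hk1
  simp only [if_pos hk2] at H1 H2 H3
  exact ⟨H1, H2, H3⟩
end
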